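/- arXiv:2602.20719 — 4 statements merged into one kernel-verified Lean document; each statement's English description precedes it below -/
import Mathlib

section
/- Let X ∈ ℝ^{n×d}, let ι be a finite index set, and for each i ∈ ι let D_i ∈ ℝ^{n×n} be a diagonal matrix with diagonal entries in {0, 1}. For a diagonal 0/1 matrix D define the cone K_D := {w ∈ ℝ^d : for all k, (Xw)_k ≥ 0 if D_{kk} = 1 and (Xw)_k < 0 if D_{kk} = 0}. Let m ≥ 1, let (w_j, α_j) ∈ ℝ^d × ℝ for j = 1, …, m, and suppose there is a map σ : {1, …, m} → ι such that w_j ∈ K_{D_{σ(j)}} for every j. For each i ∈ ι define v_i := Σ_{j : σ(j) = i, α_j ≥ 0} α_j w_j and u_i := −Σ_{j : σ(j) = i, α_j < 0} α_j w_j. Then: (a) Σ_{j=1}^m α_j ReLU(X w_j) = Σ_{i ∈ ι} D_i X (v_i − u_i), where ReLU acts componentwise: (ReLU(z))_k = max(z_k, 0); and (b) for every i ∈ ι, (2D_i − I) X v_i ≥ 0 and (2D_i − I) X u_i ≥ 0 componentwise. -/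
/-!
On the cone `K_D` the ReLU acts as the linear map `D`, so once the neurons are grouped by their
cones the network output is `∑ᵢ Dᵢ X (∑_{σ j = i} αⱼ wⱼ) = ∑ᵢ Dᵢ X (vᵢ − uᵢ)`. Moreover `K_D`
lies in the closed convex cone `{w | (2D − I) X w ≥ 0}`, and `vᵢ`, `uᵢ` are nonnegative
combinations of neurons in `K_{Dᵢ}`.
-/

open Matrix

section ActivationCones

variable {m n : Type*} [Fintype n]

/-- The paper's `K_D`: the weights whose ReLU activation pattern on `X` is the diagonal of `D`. -/
def activationCone (X : Matrix m n ℝ) (D : Matrix m m ℝ) : Set (n → ℝ) :=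
  {w | ∀ i, (D i i = 1 → 0 ≤ (X *ᵥ w) i) ∧ (D i i = 0 → (X *ᵥ w) i < 0)}

variable [Fintype m] [DecidableEq m]

def closedActivationCone (X : Matrix m n ℝ) (D : Matrix m m ℝ) : PointedCone ℝ (n → ℝ) :=
  (PointedCone.positive ℝ (m → ℝ)).comap (((2 : ℝ) • D - 1).mulVecLin ∘ₗ X.mulVecLin)

theorem mem_closedActivationCone {X : Matrix m n ℝ} {D : Matrix m m ℝ} {w : n → ℝ} :
    w ∈ closedActivationCone X D ↔ 0 ≤ ((2 : ℝ) • D - 1) *ᵥ (X *ᵥ w) :=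
  Iff.rfl

theorem Matrix.IsDiag.mulVec_apply {D : Matrix m m ℝ} (hD : D.IsDiag) (z : m → ℝ) (i : m) :
    (D *ᵥ z) i = D i i * z i := by
  rw [← hD.diagonal_diag, mulVec_diagonal, diag_apply, hD.diagonal_diag]

variable {X : Matrix m n ℝ} {D : Matrix m m ℝ}

theorem activationCone_subset_closedActivationCone (hD : D.IsDiag)
    (hD01 : ∀ i, D i i = 0 ∨ D i i = 1) :
    activationCone X D ⊆ closedActivationCone X D := by
  intro w hw
  rw [SetLike.mem_coe, mem_closedActivationCone]
  intro i
  have h2D : ((2 : ℝ) • D - 1).IsDiag := (hD.smul 2).sub isDiag_one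
  rw [Pi.zero_apply, h2D.mulVec_apply]
  rcases hD01 i with h0 | h1
  · simp [h0, ((hw i).2 h0).le]
  · simpa [h1] using (hw i).1 h1

theorem relu_eq_mulVec_of_mem_activationCone (hD : D.IsDiag)
    (hD01 : ∀ i, D i i = 0 ∨ D i i = 1) {w : n → ℝ} (hw : w ∈ activationCone X D) :
    (fun i => max ((X *ᵥ w) i) 0) = D *ᵥ (X *ᵥ w) := by
  funext i
  rw [hD.mulVec_apply]
  rcases hD01 i with h0 | h1
  · rw [h0, zero_mul, max_eq_right ((hw i).2 h0).le]
  · rw [h1, one_mul, max_eq_left ((hw i).1 h1)]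

end ActivationCones

theorem PointedCone.sum_smul_mem {E ι : Type*} [AddCommMonoid E] [Module ℝ E]
    (C : PointedCone ℝ E) {s : Finset ι} {c : ι → ℝ} {x : ι → E}
    (hc : ∀ j ∈ s, 0 ≤ c j) (hx : ∀ j ∈ s, x j ∈ C) : ∑ j ∈ s, c j • x j ∈ C :=
  Submodule.sum_mem C fun j hj => C.smul_mem (hc j hj) (hx j hj)

theorem Finset.sum_filter_nonneg_add_sum_filter_neg {ι M : Type*} [AddCommMonoid M]
    (s : Finset ι) (a : ι → ℝ) (f : ι → M) :
    ∑ j ∈ s.filter (fun j => 0 ≤ a j), f j + ∑ j ∈ s.filter (fun j => a j < 0), f j =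
      ∑ j ∈ s, f j := by
  classical
  simpa only [not_le] using Finset.sum_filter_add_sum_filter_not s (fun j => 0 ≤ a j) f

open scoped Classical in
theorem stmt_6_general (n d : ℕ) (X : Matrix (Fin n) (Fin d) ℝ)
    (ι : Type) [Fintype ι]
    (D : ι → Matrix (Fin n) (Fin n) ℝ)
    (hDdiag : ∀ i, ∀ k k' : Fin n, k ≠ k' → D i k k' = 0)
    (hD01 : ∀ i, ∀ k : Fin n, D i k k = 0 ∨ D i k k = 1)
    (m : ℕ)
    (w : Fin m → Fin d → ℝ) (α : Fin m → ℝ) (σ : Fin m → ι)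
    (hcone : ∀ j, ∀ k : Fin n,
      (D (σ j) k k = 1 → 0 ≤ (X *ᵥ w j) k) ∧ (D (σ j) k k = 0 → (X *ᵥ w j) k < 0))
    (v u : ι → Fin d → ℝ)
    (hv : ∀ i, v i = ∑ j ∈ Finset.univ.filter (fun j => σ j = i ∧ 0 ≤ α j), α j • w j)
    (hu : ∀ i, u i = -∑ j ∈ Finset.univ.filter (fun j => σ j = i ∧ α j < 0), α j • w j) :
    ((∑ j, α j • (fun k => max ((X *ᵥ w j) k) 0)) = ∑ i, (D i) *ᵥ (X *ᵥ (v i - u i)))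
    ∧ (∀ i, ∀ k : Fin n,
        0 ≤ ((((2 : ℝ) • D i) - 1) *ᵥ (X *ᵥ v i)) k ∧
        0 ≤ ((((2 : ℝ) • D i) - 1) *ᵥ (X *ᵥ u i)) k) := by
  have hDiag (i : ι) : (D i).IsDiag := fun _ _ => hDdiag i _ _
  have hmem (j : Fin m) : w j ∈ activationCone X (D (σ j)) := hcone j
  have hvu (i : ι) : v i - u i = ∑ j ∈ Finset.univ.filter (fun j => σ j = i), α j • w j := by
    rw [hv, hu, sub_neg_eq_add, ← Finset.sum_filter_nonneg_add_sum_filter_neg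
      (Finset.univ.filter (fun j => σ j = i)) α, Finset.filter_filter, Finset.filter_filter]
  refine ⟨?_, fun i => ?_⟩
  · calc ∑ j, α j • (fun k => max ((X *ᵥ w j) k) 0)
        = ∑ j, α j • D (σ j) *ᵥ (X *ᵥ w j) := by
          simp only [relu_eq_mulVec_of_mem_activationCone (hDiag _) (hD01 _) (hmem _)]
      _ = ∑ i, ∑ j ∈ Finset.univ.filter (fun j => σ j = i), α j • D (σ j) *ᵥ (X *ᵥ w j) :=
          (Finset.sum_fiberwise _ _ _).symm
      _ = ∑ i, D i *ᵥ (X *ᵥ (v i - u i)) := by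
          refine Finset.sum_congr rfl fun i _ => ?_
          rw [hvu, mulVec_sum, mulVec_sum]
          refine Finset.sum_congr rfl fun j hj => ?_
          rw [(Finset.mem_filter.1 hj).2, mulVec_smul, mulVec_smul]
  · have hC (j : Fin m) (hj : σ j = i) : w j ∈ closedActivationCone X (D i) :=
      activationCone_subset_closedActivationCone (hDiag i) (hD01 i) (hj ▸ hmem j)
    have hvC : v i ∈ closedActivationCone X (D i) := by
      rw [hv]
      exact PointedCone.sum_smul_mem _ (fun j hj => (Finset.mem_filter.1 hj).2.2)
        fun j hj => hC j (Finset.mem_filter.1 hj).2.1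
    have huC : u i ∈ closedActivationCone X (D i) := by
      rw [hu, ← Finset.sum_neg_distrib]
      simp only [← neg_smul]
      exact PointedCone.sum_smul_mem _ (fun j hj => neg_nonneg.2 (Finset.mem_filter.1 hj).2.2.le)
        fun j hj => hC j (Finset.mem_filter.1 hj).2.1
    exact fun k => ⟨mem_closedActivationCone.1 hvC k, mem_closedActivationCone.1 huC k⟩

open scoped Classical in
/-- Grouping the neurons of a two-layer ReLU network according to
the activation-pattern cones `K_{D_i}` and aggregating the nonnegatively and
negatively weighted neurons within each cone into `v_i` and `u_i` leaves the
network output unchanged, `∑ⱼ αⱼ ReLU(X wⱼ) = ∑ᵢ Dᵢ X (vᵢ − uᵢ)`, and the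
aggregated vectors satisfy the cone constraints `(2Dᵢ − I) X vᵢ ≥ 0` and
`(2Dᵢ − I) X uᵢ ≥ 0`. -/
theorem stmt_6 (n d : ℕ) (X : Matrix (Fin n) (Fin d) ℝ)
    (ι : Type) [Fintype ι]
    (D : ι → Matrix (Fin n) (Fin n) ℝ)
    (hDdiag : ∀ i, ∀ k k' : Fin n, k ≠ k' → D i k k' = 0)
    (hD01 : ∀ i, ∀ k : Fin n, D i k k = 0 ∨ D i k k = 1)
    (m : ℕ) (hm : 1 ≤ m)
    (w : Fin m → Fin d → ℝ) (α : Fin m → ℝ) (σ : Fin m → ι)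
    (hcone : ∀ j, ∀ k : Fin n,
      (D (σ j) k k = 1 → 0 ≤ (X *ᵥ w j) k) ∧ (D (σ j) k k = 0 → (X *ᵥ w j) k < 0))
    (v u : ι → Fin d → ℝ)
    (hv : ∀ i, v i = ∑ j ∈ Finset.univ.filter (fun j => σ j = i ∧ 0 ≤ α j), α j • w j)
    (hu : ∀ i, u i = -∑ j ∈ Finset.univ.filter (fun j => σ j = i ∧ α j < 0), α j • w j) :
    ((∑ j, α j • (fun k => max ((X *ᵥ w j) k) 0)) = ∑ i, (D i) *ᵥ (X *ᵥ (v i - u i)))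
    ∧ (∀ i, ∀ k : Fin n,
        0 ≤ ((((2 : ℝ) • D i) - 1) *ᵥ (X *ᵥ v i)) k ∧
        0 ≤ ((((2 : ℝ) • D i) - 1) *ᵥ (X *ᵥ u i)) k) :=
  stmt_6_general n d X ι D hDdiag hD01 m w α σ hcone v u hv hu
end

section
/- Let n, d, m be positive integers, X ∈ ℝ^{n×d}, A : ℝ^n → ℝ^n a linear map, and e ∈ ℝ^n. For w ∈ ℝ^d let D(w) denote the diagonal 0/1 matrix with (D(w))_{kk} = 1 if (Xw)_k ≥ 0 and (D(w))_{kk} = 0 otherwise, and let 𝒫 := {D(w) : w ∈ ℝ^d} (a finite set). Then the optimal value of the nonconvex problem, inf over (w_j, α_j)_{j=1}^m ∈ (ℝ^d × ℝ)^m of ‖e − A(Σ_{j=1}^m α_j ReLU(X w_j))‖², is greater than or equal to the optimal value of the convex problem, inf over families (v_D, u_D)_{D ∈ 𝒫} of vectors in ℝ^d satisfying (2D − I) X v_D ≥ 0 and (2D − I) X u_D ≥ 0 componentwise for every D ∈ 𝒫, of ‖e − A(Σ_{D ∈ 𝒫} D X (v_D − u_D))‖². Here ReLU acts componentwise: (ReLU(z))_k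 = max(z_k, 0), and ‖·‖ is the Euclidean norm. -/
/-
Every network is itself a feasible point of the convex program. Group the neurons by their
activation pattern b = D(w_j) ∈ 𝒫, and put v_b = Σ α_j⁺ w_j and u_b = Σ α_j⁻ w_j over that group.
The sign pattern of X w_j is b, so each X w_j, hence every nonnegative combination of them, meets
the cone constraint (2D_b − I) X z ≥ 0; and D_b X w_j = ReLU(X w_j), so D_b X (v_b − u_b) is the
group's contribution Σ α_j ReLU(X w_j). The nonconvex objective values therefore form a subset of
the convex ones, which are bounded below by 0.
-/

open Matrix Finset

noncomputable def actD (n : ℕ) (b : Fin n → Bool) : Matrix (Fin n) (Fin n) ℝ :=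
  Matrix.diagonal (fun k => if b k then 1 else 0)

variable {n d : ℕ}

noncomputable def actPattern (X : Matrix (Fin n) (Fin d) ℝ) (w : Fin d → ℝ) : Fin n → Bool :=
  fun k => decide (0 ≤ (X *ᵥ w) k)

lemma actD_mulVec_apply (b : Fin n → Bool) (z : Fin n → ℝ) (k : Fin n) :
    (actD n b *ᵥ z) k = if b k then z k else 0 := by
  simp [actD, mulVec_diagonal]

lemma actD_actPattern_mulVec (X : Matrix (Fin n) (Fin d) ℝ) (w : Fin d → ℝ) :
    actD n (actPattern X w) *ᵥ (X *ᵥ w) = fun k => max ((X *ᵥ w) k) 0 := by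
  funext k
  by_cases h : 0 ≤ (X *ᵥ w) k
  · simp [actD_mulVec_apply, actPattern, h]
  · simp [actD_mulVec_apply, actPattern, h, (not_le.mp h).le]

lemma two_smul_actD_sub_one_mulVec_apply (b : Fin n → Bool) (z : Fin n → ℝ) (k : Fin n) :
    (((2 : ℝ) • actD n b - 1) *ᵥ z) k = if b k then z k else -z k := by
  simp only [sub_mulVec, smul_mulVec, one_mulVec, Pi.sub_apply, Pi.smul_apply, actD_mulVec_apply]
  split_ifs <;> ring

lemma two_smul_actD_actPattern_sub_one_mulVec_nonneg (X : Matrix (Fin n) (Fin d) ℝ)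
    (w : Fin d → ℝ) : 0 ≤ ((2 : ℝ) • actD n (actPattern X w) - 1) *ᵥ (X *ᵥ w) := by
  intro k
  rw [Pi.zero_apply, two_smul_actD_sub_one_mulVec_apply]
  by_cases h : 0 ≤ (X *ᵥ w) k
  · simp [actPattern, h]
  · simpa [actPattern, h] using (not_le.mp h).le

lemma mulVec_sum_smul_nonneg {ι κ μ : Type*} [Fintype μ] (M : Matrix κ μ ℝ) (s : Finset ι)
    (c : ι → ℝ) (w : ι → μ → ℝ) (hc : ∀ j ∈ s, 0 ≤ c j) (hw : ∀ j ∈ s, 0 ≤ M *ᵥ w j) :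
    0 ≤ M *ᵥ ∑ j ∈ s, c j • w j := by
  rw [mulVec_sum]
  exact sum_nonneg fun j hj => by rw [mulVec_smul]; exact smul_nonneg (hc j hj) (hw j hj)

lemma cone_constraint_sum_smul {ι : Type*} (X : Matrix (Fin n) (Fin d) ℝ) (b : Fin n → Bool)
    (s : Finset ι) (c : ι → ℝ) (w : ι → Fin d → ℝ) (hc : ∀ j ∈ s, 0 ≤ c j)
    (hw : ∀ j ∈ s, actPattern X (w j) = b) (k : Fin n) :
    0 ≤ (((2 : ℝ) • actD n b - 1) *ᵥ (X *ᵥ ∑ j ∈ s, c j • w j)) k := by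
  rw [mulVec_mulVec]
  refine mulVec_sum_smul_nonneg _ s c w hc (fun j hj => ?_) k
  rw [← mulVec_mulVec, ← hw j hj]
  exact two_smul_actD_actPattern_sub_one_mulVec_nonneg X (w j)

lemma sum_posPart_smul_sub_sum_negPart_smul {ι E : Type*} [AddCommGroup E] [Module ℝ E]
    (s : Finset ι) (α : ι → ℝ) (w : ι → E) :
    ∑ j ∈ s, (α j)⁺ • w j - ∑ j ∈ s, (α j)⁻ • w j = ∑ j ∈ s, α j • w j := by
  simp only [← sum_sub_distrib, ← sub_smul, posPart_sub_negPart]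

lemma sum_actD_mulVec_fiber {m : ℕ} (X : Matrix (Fin n) (Fin d) ℝ) (P : Finset (Fin n → Bool))
    (w : Fin m → Fin d → ℝ) (α : Fin m → ℝ) (hP : ∀ j, actPattern X (w j) ∈ P) :
    ∑ b ∈ P, actD n b *ᵥ (X *ᵥ ∑ j with actPattern X (w j) = b, α j • w j)
      = ∑ j, α j • fun k => max ((X *ᵥ w j) k) 0 := by
  rw [← sum_fiberwise_of_maps_to (fun j _ => hP j)]
  refine sum_congr rfl fun b _ => ?_
  rw [mulVec_sum, mulVec_sum]
  refine sum_congr rfl fun j hj => ?_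
  rw [← (mem_filter.mp hj).2, mulVec_smul, mulVec_smul, actD_actPattern_mulVec]

theorem stmt_7_general (n d m : ℕ)
    (X : Matrix (Fin n) (Fin d) ℝ)
    (A : (Fin n → ℝ) →ₗ[ℝ] (Fin n → ℝ))
    (e : Fin n → ℝ)
    (P : Finset (Fin n → Bool))
    (hP : ∀ b, b ∈ P ↔ ∃ w : Fin d → ℝ, b = fun k => decide (0 ≤ (X *ᵥ w) k)) :
    sInf { r : ℝ | ∃ v u : (Fin n → Bool) → (Fin d → ℝ),
        (∀ b ∈ P, (∀ k, 0 ≤ ((((2 : ℝ) • actD n b) - 1) *ᵥ (X *ᵥ v b)) k) ∧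
                  (∀ k, 0 ≤ ((((2 : ℝ) • actD n b) - 1) *ᵥ (X *ᵥ u b)) k)) ∧
        r = ∑ k, (e k - A (∑ b ∈ P, (actD n b) *ᵥ (X *ᵥ (v b - u b))) k) ^ 2 }
    ≤ sInf { r : ℝ | ∃ (w : Fin m → Fin d → ℝ) (α : Fin m → ℝ),
        r = ∑ k, (e k - A (∑ j, α j • (fun k' => max ((X *ᵥ w j) k') 0)) k) ^ 2 } := by
  refine csInf_le_csInf ⟨0, ?_⟩ ⟨_, 0, 0, rfl⟩ ?_
  · rintro r ⟨v, u, -, rfl⟩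
    positivity
  rintro r ⟨w, α, rfl⟩
  have hfiber (c : Fin m → ℝ) (hc : ∀ j, 0 ≤ c j) (b : Fin n → Bool) (k : Fin n) :=
    cone_constraint_sum_smul X b {j | actPattern X (w j) = b} c w (fun j _ => hc j)
      (fun j hj => (mem_filter.mp hj).2) k
  refine ⟨fun b => ∑ j with actPattern X (w j) = b, (α j)⁺ • w j,
    fun b => ∑ j with actPattern X (w j) = b, (α j)⁻ • w j,
    fun b _ => ⟨hfiber _ (fun j => posPart_nonneg _) b, hfiber _ (fun j => negPart_nonneg _) b⟩, ?_⟩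
  simp only [sum_posPart_smul_sub_sum_negPart_smul]
  rw [sum_actD_mulVec_fiber X P w α fun j => (hP _).2 ⟨w j, rfl⟩]

/-- the optimal value of the nonconvex two-layer ReLU training
problem (width `m`, data matrix `X`, linear operator `A`, residual `e`) is
bounded below by the optimal value of the convex reformulation over the
activation patterns `𝒫 = {D(w) : w ∈ ℝ^d}`. -/
theorem stmt_7 (n d m : ℕ) (hn : 0 < n) (hd : 0 < d) (hm : 0 < m)
    (X : Matrix (Fin n) (Fin d) ℝ)
    (A : (Fin n → ℝ) →ₗ[ℝ] (Fin n → ℝ))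
    (e : Fin n → ℝ)
    (P : Finset (Fin n → Bool))
    (hP : ∀ b, b ∈ P ↔ ∃ w : Fin d → ℝ, b = fun k => decide (0 ≤ (X *ᵥ w) k)) :
    sInf { r : ℝ | ∃ v u : (Fin n → Bool) → (Fin d → ℝ),
        (∀ b ∈ P, (∀ k, 0 ≤ ((((2 : ℝ) • actD n b) - 1) *ᵥ (X *ᵥ v b)) k) ∧
                  (∀ k, 0 ≤ ((((2 : ℝ) • actD n b) - 1) *ᵥ (X *ᵥ u b)) k)) ∧
        r = ∑ k, (e k - A (∑ b ∈ P, (actD n b) *ᵥ (X *ᵥ (v b - u b))) k) ^ 2 }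
    ≤ sInf { r : ℝ | ∃ (w : Fin m → Fin d → ℝ) (α : Fin m → ℝ),
        r = ∑ k, (e k - A (∑ j, α j • (fun k' => max ((X *ᵥ w j) k') 0)) k) ^ 2 } :=
  stmt_7_general n d m X A e P hP
end

section
/- Let n, d be positive integers, X ∈ ℝ^{n×d}, and for w ∈ ℝ^d let D(w) denote the diagonal 0/1 matrix with (D(w))_{kk} = 1 if (Xw)_k ≥ 0 and (D(w))_{kk} = 0 otherwise; let 𝒫 := {D(w) : w ∈ ℝ^d}. Suppose (v_D, u_D)_{D ∈ 𝒫} is a family of vectors in ℝ^d satisfying (2D − I) X v_D ≥ 0 and (2D − I) X u_D ≥ 0 componentwise for every D ∈ 𝒫, and let m be an integer with m ≥ Σ_{D ∈ 𝒫} (1[v_D ≠ 0] + 1[u_D ≠ 0]). Then there exist (w_j, α_j) ∈ ℝ^d × ℝ for j = 1, …, m such that Σ_{j=1}^m α_j ReLU(X w_j) = Σ_{D ∈ 𝒫} D X (v_D − u_D), where ReLU acts componentwise: (ReLU(z))_k = max(z_k, 0). -/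
open Matrix

open scoped Classical

/-- Sum over a Finset equals sum over the mapped `toList`. -/
lemma finset_sum_toList_map {α β : Type*} [AddCommMonoid β] (P : Finset α) (f : α → β) :
    (P.toList.map f).sum = ∑ b ∈ P, f b := by
  rw [Finset.sum, ← Multiset.coe_toList P.val, Multiset.map_coe, Multiset.sum_coe]
  rfl

/-- If the feasibility condition holds, the ReLU of `X *ᵥ y` equals the masked vector. -/
lemma relu_eq_masked {n d : ℕ} (X : Matrix (Fin n) (Fin d) ℝ) (b : Fin n → Bool)
    (y : Fin d → ℝ)
    (hy : ∀ k, 0 ≤ ((((2 : ℝ) • actD n b) - 1) *ᵥ (X *ᵥ y)) k) :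
    (fun k => max ((X *ᵥ y) k) 0) = (actD n b) *ᵥ (X *ᵥ y) := by
  funext k
  have hk := hy k
  rw [Matrix.sub_mulVec, Matrix.smul_mulVec, Matrix.one_mulVec] at hk
  simp only [Pi.sub_apply, Pi.smul_apply, actD, Matrix.mulVec_diagonal, smul_eq_mul] at hk ⊢
  by_cases hbk : b k
  · simp only [hbk, if_true, one_mul] at hk ⊢
    exact max_eq_left (by linarith)
  · have hbk' : b k = false := by simpa using hbk
    simp only [hbk', Bool.false_eq_true, if_false, mul_zero, zero_mul, zero_sub] at hk ⊢
    exact max_eq_right (by linarith)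

/-- any feasible family `(v_D, u_D)_{D ∈ 𝒫}` of the convex
reformulation can be realized exactly by a two-layer ReLU network of width
`m`, provided `m` is at least the number of nonzero aggregated vectors. -/
theorem stmt_9 (n d : ℕ) (hn : 0 < n) (hd : 0 < d)
    (X : Matrix (Fin n) (Fin d) ℝ)
    (P : Finset (Fin n → Bool))
    (hP : ∀ b, b ∈ P ↔ ∃ w : Fin d → ℝ, b = fun k => decide (0 ≤ (X *ᵥ w) k))
    (v u : (Fin n → Bool) → (Fin d → ℝ))
    (hfeas : ∀ b ∈ P, (∀ k, 0 ≤ ((((2 : ℝ) • actD n b) - 1) *ᵥ (X *ᵥ v b)) k) ∧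
                      (∀ k, 0 ≤ ((((2 : ℝ) • actD n b) - 1) *ᵥ (X *ᵥ u b)) k))
    (m : ℕ)
    (hm : (∑ b ∈ P, ((if v b ≠ 0 then 1 else 0) + (if u b ≠ 0 then 1 else 0))) ≤ m) :
    ∃ (w : Fin m → Fin d → ℝ) (α : Fin m → ℝ),
      (∑ j, α j • (fun k => max ((X *ᵥ w j) k) 0)) =
        ∑ b ∈ P, (actD n b) *ᵥ (X *ᵥ (v b - u b)) := by
  classical
  -- the contribution of one neuron
  set F : (Fin d → ℝ) × ℝ → (Fin n → ℝ) :=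
    fun p => p.2 • (fun k => max ((X *ᵥ p.1) k) 0) with hF
  have hF0 : F ((0 : Fin d → ℝ), (0 : ℝ)) = 0 := by
    simp [hF]
  -- list of neurons realizing the nonzero aggregated vectors
  set g : (Fin n → Bool) → List ((Fin d → ℝ) × ℝ) :=
    fun b => (if v b ≠ 0 then [(v b, (1 : ℝ))] else []) ++
             (if u b ≠ 0 then [(u b, (-1 : ℝ))] else []) with hg
  set L : List ((Fin d → ℝ) × ℝ) := P.toList.flatMap g with hLdef
  have hlen : L.length ≤ m := by
    have h1 : L.length = (P.toList.map (fun b => (g b).length)).sum := by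
      rw [hLdef, List.length_flatMap]
    have h2 : ∀ b, (g b).length =
        ((if v b ≠ 0 then 1 else 0) + (if u b ≠ 0 then 1 else 0)) := by
      intro b
      by_cases h1 : v b ≠ 0 <;> by_cases h2 : u b ≠ 0 <;> simp [hg, h1, h2]
    calc L.length = (P.toList.map (fun b =>
          ((if v b ≠ 0 then 1 else 0) + (if u b ≠ 0 then 1 else 0)))).sum := by
          rw [h1]; congr 1; exact List.map_congr_left (fun b _ => h2 b)
      _ = ∑ b ∈ P, ((if v b ≠ 0 then 1 else 0) + (if u b ≠ 0 then 1 else 0)) :=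
          finset_sum_toList_map P _
      _ ≤ m := hm
  -- pad with zero neurons
  set L' : List ((Fin d → ℝ) × ℝ) :=
    L ++ List.replicate (m - L.length) ((0 : Fin d → ℝ), (0 : ℝ)) with hL'def
  have hlen' : L'.length = m := by
    simp [hL'def, Nat.add_sub_cancel' hlen]
  refine ⟨fun j => (L'.get (Fin.cast hlen'.symm j)).1,
          fun j => (L'.get (Fin.cast hlen'.symm j)).2, ?_⟩
  -- the total network output is the sum of F over the list L'
  have hsum1 : (∑ j : Fin m,
      (L'.get (Fin.cast hlen'.symm j)).2 •
        (fun k => max ((X *ᵥ (L'.get (Fin.cast hlen'.symm j)).1) k) 0)) =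
      (L'.map F).sum := by
    have hml : (L'.map F).length = m := by simp [hlen']
    rw [← Fin.sum_univ_getElem (L'.map F), ← Fin.sum_congr' _ hml]
    apply Finset.sum_congr rfl
    intro j _
    simp only [List.getElem_map]
    rfl
  rw [hsum1]
  -- split off the padding
  have hsum2 : (L'.map F).sum = (L.map F).sum := by
    rw [hL'def, List.map_append, List.sum_append, List.map_replicate, hF0,
      List.sum_replicate, smul_zero, add_zero]
  rw [hsum2]
  -- evaluate the sum over the flatMap
  rw [hLdef, List.map_flatMap]
  have hsum3 : ∀ b ∈ P, ((g b).map F).sum =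
      (actD n b) *ᵥ (X *ᵥ (v b - u b)) := by
    intro b hb
    obtain ⟨hv, hu⟩ := hfeas b hb
    have hvmask := relu_eq_masked X b (v b) hv
    have humask := relu_eq_masked X b (u b) hu
    have hFv : F (v b, (1 : ℝ)) = (actD n b) *ᵥ (X *ᵥ v b) := by
      rw [hF]; simp only; rw [hvmask]; exact one_smul _ _
    have hFu : F (u b, (-1 : ℝ)) = -((actD n b) *ᵥ (X *ᵥ u b)) := by
      rw [hF]; simp only; rw [humask]; exact neg_one_smul _ _
    have hFv0 : v b = 0 → F (v b, (1 : ℝ)) = 0 := by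
      intro h; funext k; simp [hF, h]
    have hFu0 : u b = 0 → F (u b, (-1 : ℝ)) = 0 := by
      intro h; funext k; simp [hF, h]
    have key : ((g b).map F).sum = F (v b, (1 : ℝ)) + F (u b, (-1 : ℝ)) := by
      simp only [hg]
      by_cases h1 : v b ≠ 0 <;> by_cases h2 : u b ≠ 0
      · rw [if_pos h1, if_pos h2]; simp
      · rw [if_pos h1, if_neg h2]; push_neg at h2; simp [hFu0 h2]
      · rw [if_neg h1, if_pos h2]; push_neg at h1; simp [hFv0 h1]
      · rw [if_neg h1, if_neg h2]; push_neg at h1 h2; simp [hFv0 h1, hFu0 h2]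
    rw [key, hFv, hFu, Matrix.mulVec_sub, Matrix.mulVec_sub]
    abel
  -- sum over the list of P equals the Finset sum
  calc (P.toList.flatMap fun b => (g b).map F).sum
      = (P.toList.map (fun b => ((g b).map F).sum)).sum := by
        rw [List.flatMap, List.sum_flatten, List.map_map]; rfl
    _ = ∑ b ∈ P, ((g b).map F).sum := finset_sum_toList_map P _
    _ = ∑ b ∈ P, (actD n b) *ᵥ (X *ᵥ (v b - u b)) :=
        Finset.sum_congr rfl hsum3
end

section
/- Let n, d be positive integers, X ∈ ℝ^{n×d}, A : ℝ^n → ℝ^n a linear map, and e ∈ ℝ^n. For w ∈ ℝ^d let D(w) denote the diagonal 0/1 matrix with (D(w))_{kk} = 1 if (Xw)_k ≥ 0 and (D(w))_{kk} = 0 otherwise, and let 𝒫 := {D(w) : w ∈ ℝ^d}. Suppose (v_D*, u_D*)_{D ∈ 𝒫} is an optimal solution of the convex problem: it satisfies (2D − I) X v_D* ≥ 0 and (2D − I) X u_D* ≥ 0 componentwise for every D ∈ 𝒫, and it minimizes ‖e − A(Σ_{D ∈ 𝒫} D X (v_D − u_D))‖² over all such feasible families. Let m* := Σ_{D ∈ 𝒫}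 (1[v_D* ≠ 0] + 1[u_D* ≠ 0]) and let m ≥ m*. Then the infimum over (w_j, α_j)_{j=1}^m ∈ (ℝ^d × ℝ)^m of ‖e − A(Σ_{j=1}^m α_j ReLU(X w_j))‖² equals the optimal value of the convex problem, and this infimum is attained. Here ReLU acts componentwise: (ReLU(z))_k = max(z_k, 0), and ‖·‖ is the Euclidean norm. -/
/-!
A neuron `α • ReLU (X w)` equals `α • D X w` where `D` is the activation pattern of `w`, and `w`
lies in the cone `K_D = {v | (2D - I) X v ≥ 0}`, on which `ReLU (X ·)` coincides with the linear map
`D X`. Hence every network output is `∑_D D X (v_D - u_D)` with `v_D, u_D ∈ K_D` (group the neurons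
by pattern and split the output weights into positive and negative parts), so the convex value is a
lower bound. Conversely, each nonzero `v_D*` (resp. `u_D*`) is a neuron with output weight `1`
(resp. `-1`) whose ReLU output is `D X v_D*`, and these `m* ≤ m` neurons, padded with zeros,
realize the convex optimum.
-/

open Matrix
open scoped Classical

namespace TwoLayerReLU

open Finset

variable {n d : ℕ}

def relu {κ : Type*} (z : κ → ℝ) : κ → ℝ := fun k => max (z k) 0

@[simp]
lemma relu_zero {κ : Type*} : relu (0 : κ → ℝ) = 0 := by
  funext k
  simp [relu]

noncomputable def actPattern (X : Matrix (Fin n) (Fin d) ℝ) (w : Fin d → ℝ) : Fin n → Bool :=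
  fun k => decide (0 ≤ (X *ᵥ w) k)

def actCone (X : Matrix (Fin n) (Fin d) ℝ) (b : Fin n → Bool) : Set (Fin d → ℝ) :=
  {v | ∀ k, 0 ≤ ((((2 : ℝ) • actD n b) - 1) *ᵥ (X *ᵥ v)) k}

lemma actD_mulVec_apply (b : Fin n → Bool) (z : Fin n → ℝ) (k : Fin n) :
    (actD n b *ᵥ z) k = if b k then z k else 0 := by
  simp [actD, Matrix.mulVec_diagonal, ite_mul]

lemma two_smul_actD_sub_one_mulVec_apply (b : Fin n → Bool) (z : Fin n → ℝ) (k : Fin n) :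
    ((((2 : ℝ) • actD n b) - 1) *ᵥ z) k = if b k then z k else -z k := by
  rw [Matrix.sub_mulVec, Matrix.smul_mulVec, Matrix.one_mulVec]
  simp only [Pi.sub_apply, Pi.smul_apply, actD_mulVec_apply, smul_eq_mul]
  split <;> ring

lemma relu_mulVec_eq_actD_mulVec {X : Matrix (Fin n) (Fin d) ℝ} {b : Fin n → Bool}
    {v : Fin d → ℝ} (hv : v ∈ actCone X b) :
    relu (X *ᵥ v) = actD n b *ᵥ (X *ᵥ v) := by
  funext k
  have hk := hv k
  rw [two_smul_actD_sub_one_mulVec_apply] at hk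
  rw [relu, actD_mulVec_apply]
  split_ifs at hk ⊢
  · exact max_eq_left hk
  · exact max_eq_right (by linarith)

lemma mem_actCone_actPattern (X : Matrix (Fin n) (Fin d) ℝ) (w : Fin d → ℝ) :
    w ∈ actCone X (actPattern X w) := by
  intro k
  rw [two_smul_actD_sub_one_mulVec_apply]
  by_cases h : 0 ≤ (X *ᵥ w) k <;> simp [actPattern, h]; linarith

lemma sum_smul_mem_actCone {ι : Type*} {X : Matrix (Fin n) (Fin d) ℝ} {b : Fin n → Bool}
    {s : Finset ι} {c : ι → ℝ} {w : ι → Fin d → ℝ}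
    (hc : ∀ i ∈ s, 0 ≤ c i) (hw : ∀ i ∈ s, w i ∈ actCone X b) :
    ∑ i ∈ s, c i • w i ∈ actCone X b := by
  intro k
  simp only [Matrix.mulVec_sum, Matrix.mulVec_smul, Finset.sum_apply, Pi.smul_apply, smul_eq_mul]
  exact sum_nonneg fun i hi => mul_nonneg (hc i hi) (hw i hi k)

lemma exists_actCone_sum_eq_network {ι : Type*} [Fintype ι] (X : Matrix (Fin n) (Fin d) ℝ)
    (P : Finset (Fin n → Bool)) (hP : ∀ w, actPattern X w ∈ P)
    (w : ι → Fin d → ℝ) (α : ι → ℝ) :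
    ∃ v u : (Fin n → Bool) → Fin d → ℝ, (∀ b, v b ∈ actCone X b ∧ u b ∈ actCone X b) ∧
      ∑ b ∈ P, actD n b *ᵥ (X *ᵥ (v b - u b)) = ∑ i, α i • relu (X *ᵥ w i) := by
  set neurons : (Fin n → Bool) → Finset ι := fun b => {i | actPattern X (w i) = b}
  have hcone : ∀ b, ∀ i ∈ neurons b, w i ∈ actCone X b := fun b i hi =>
    (mem_filter.1 hi).2 ▸ mem_actCone_actPattern X (w i)
  refine ⟨fun b => ∑ i ∈ neurons b, (α i)⁺ • w i, fun b => ∑ i ∈ neurons b, (α i)⁻ • w i,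
    fun b => ⟨sum_smul_mem_actCone (fun i _ => posPart_nonneg _) (hcone b),
      sum_smul_mem_actCone (fun i _ => negPart_nonneg _) (hcone b)⟩, ?_⟩
  have hfiber : ∀ b, actD n b *ᵥ (X *ᵥ (∑ i ∈ neurons b, (α i)⁺ • w i -
      ∑ i ∈ neurons b, (α i)⁻ • w i)) = ∑ i ∈ neurons b, α i • relu (X *ᵥ w i) := by
    intro b
    simp only [← sum_sub_distrib, ← sub_smul, posPart_sub_negPart, Matrix.mulVec_sum,
      Matrix.mulVec_smul]
    exact sum_congr rfl fun i hi => by rw [relu_mulVec_eq_actD_mulVec (hcone b i hi)]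
  simp only [hfiber]
  exact sum_fiberwise_of_maps_to (fun i _ => hP (w i)) _

lemma exists_fin_sum_eq_of_card_filter_ne_zero_le {ι V M : Type*} [AddCommMonoid V]
    [DecidableEq V] [AddCommMonoid M] [Module ℝ M] (f : V → M) (hf : f 0 = 0) (s : Finset ι)
    (w : ι → V) (α : ι → ℝ) {m : ℕ} (hm : #{i ∈ s | w i ≠ 0} ≤ m) :
    ∃ (w' : Fin m → V) (α' : Fin m → ℝ), ∑ j, α' j • f (w' j) = ∑ i ∈ s, α i • f (w i) := by
  obtain ⟨emb⟩ : Nonempty ({i ∈ s | w i ≠ 0} ↪ Fin m) := by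
    rwa [Function.Embedding.nonempty_iff_card_le, Fintype.card_coe, Fintype.card_fin]
  refine ⟨Function.extend emb (fun i => w i) 0, Function.extend emb (fun i => α i) 0, ?_⟩
  rw [← sum_filter_of_ne (p := fun i => w i ≠ 0) fun i _ h hw => h (by simp [hw, hf]),
    ← sum_coe_sort {i ∈ s | w i ≠ 0}]
  refine (Fintype.sum_of_injective emb emb.injective _ _ (fun j hj => ?_) fun i => ?_).symm
  · simp [Function.extend_apply' _ _ _ hj, hf]
  · simp only [emb.injective.extend_apply]

lemma exists_fin_network_eq_actCone_sum {X : Matrix (Fin n) (Fin d) ℝ} {P : Finset (Fin n → Bool)}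
    {vs us : (Fin n → Bool) → Fin d → ℝ}
    (hfeas : ∀ b ∈ P, vs b ∈ actCone X b ∧ us b ∈ actCone X b) {m : ℕ}
    (hm : ∑ b ∈ P, ((if vs b ≠ 0 then 1 else 0) + (if us b ≠ 0 then 1 else 0)) ≤ m) :
    ∃ (w : Fin m → Fin d → ℝ) (α : Fin m → ℝ),
      ∑ j, α j • relu (X *ᵥ w j) = ∑ b ∈ P, actD n b *ᵥ (X *ᵥ (vs b - us b)) := by
  set w : (Fin n → Bool) × Bool → Fin d → ℝ := fun p => cond p.2 (vs p.1) (us p.1)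
  set α : (Fin n → Bool) × Bool → ℝ := fun p => cond p.2 1 (-1)
  have hcard : #{p ∈ P ×ˢ univ | w p ≠ 0} ≤ m := by
    rw [card_filter, sum_product]
    convert hm using 2 with b
    rw [Fintype.sum_bool]
    simp only [w, cond_true, cond_false]
  obtain ⟨w', α', hw'⟩ := exists_fin_sum_eq_of_card_filter_ne_zero_le
    (fun v => relu (X *ᵥ v)) (by simp) _ w α hcard
  refine ⟨w', α', hw'.trans ?_⟩
  rw [sum_product]
  refine sum_congr rfl fun b hb => ?_
  rw [Fintype.sum_bool]
  simp only [w, α, cond_true, cond_false, one_smul, neg_one_smul,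
    relu_mulVec_eq_actD_mulVec (hfeas b hb).1, relu_mulVec_eq_actD_mulVec (hfeas b hb).2]
  rw [Matrix.mulVec_sub, Matrix.mulVec_sub, sub_eq_add_neg]

end TwoLayerReLU

theorem stmt_10_general (n d : ℕ)
    (X : Matrix (Fin n) (Fin d) ℝ)
    (A : (Fin n → ℝ) →ₗ[ℝ] (Fin n → ℝ))
    (e : Fin n → ℝ)
    (P : Finset (Fin n → Bool))
    (hP : ∀ b, b ∈ P ↔ ∃ w : Fin d → ℝ, b = fun k => decide (0 ≤ (X *ᵥ w) k))
    (vs us : (Fin n → Bool) → (Fin d → ℝ))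
    (hfeas : ∀ b ∈ P, (∀ k, 0 ≤ ((((2 : ℝ) • actD n b) - 1) *ᵥ (X *ᵥ vs b)) k) ∧
                      (∀ k, 0 ≤ ((((2 : ℝ) • actD n b) - 1) *ᵥ (X *ᵥ us b)) k))
    (hopt : ∀ v u : (Fin n → Bool) → (Fin d → ℝ),
      (∀ b ∈ P, (∀ k, 0 ≤ ((((2 : ℝ) • actD n b) - 1) *ᵥ (X *ᵥ v b)) k) ∧
                (∀ k, 0 ≤ ((((2 : ℝ) • actD n b) - 1) *ᵥ (X *ᵥ u b)) k)) →
      (∑ k, (e k - A (∑ b ∈ P, (actD n b) *ᵥ (X *ᵥ (vs b - us b))) k) ^ 2) ≤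
        ∑ k, (e k - A (∑ b ∈ P, (actD n b) *ᵥ (X *ᵥ (v b - u b))) k) ^ 2)
    (m : ℕ)
    (hm : (∑ b ∈ P, ((if vs b ≠ 0 then 1 else 0) + (if us b ≠ 0 then 1 else 0))) ≤ m) :
    IsLeast { r : ℝ | ∃ (w : Fin m → Fin d → ℝ) (α : Fin m → ℝ),
        r = ∑ k, (e k - A (∑ j, α j • (fun k' => max ((X *ᵥ w j) k') 0)) k) ^ 2 }
      (∑ k, (e k - A (∑ b ∈ P, (actD n b) *ᵥ (X *ᵥ (vs b - us b))) k) ^ 2) := by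
  refine ⟨?_, ?_⟩
  · obtain ⟨w, α, hnet⟩ := TwoLayerReLU.exists_fin_network_eq_actCone_sum hfeas hm
    exact ⟨w, α, by rw [← hnet]; rfl⟩
  · rintro r ⟨w, α, rfl⟩
    obtain ⟨v, u, hcone, hnet⟩ :=
      TwoLayerReLU.exists_actCone_sum_eq_network X P (fun w => (hP _).2 ⟨w, rfl⟩) w α
    have hle := hopt v u fun b _ => hcone b
    rwa [hnet] at hle

/-- if `(v*, u*)` is an optimal solution of the convex
reformulation and the width `m` is at least the number `m*` of its nonzero
aggregated vectors, then the nonconvex two-layer ReLU training objective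
attains its infimum, and this infimum equals the convex optimal value
(the objective evaluated at `(v*, u*)`). -/
theorem stmt_10 (n d : ℕ) (hn : 0 < n) (hd : 0 < d)
    (X : Matrix (Fin n) (Fin d) ℝ)
    (A : (Fin n → ℝ) →ₗ[ℝ] (Fin n → ℝ))
    (e : Fin n → ℝ)
    (P : Finset (Fin n → Bool))
    (hP : ∀ b, b ∈ P ↔ ∃ w : Fin d → ℝ, b = fun k => decide (0 ≤ (X *ᵥ w) k))
    (vs us : (Fin n → Bool) → (Fin d → ℝ))
    (hfeas : ∀ b ∈ P, (∀ k, 0 ≤ ((((2 : ℝ) • actD n b) - 1) *ᵥ (X *ᵥ vs b)) k) ∧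
                      (∀ k, 0 ≤ ((((2 : ℝ) • actD n b) - 1) *ᵥ (X *ᵥ us b)) k))
    (hopt : ∀ v u : (Fin n → Bool) → (Fin d → ℝ),
      (∀ b ∈ P, (∀ k, 0 ≤ ((((2 : ℝ) • actD n b) - 1) *ᵥ (X *ᵥ v b)) k) ∧
                (∀ k, 0 ≤ ((((2 : ℝ) • actD n b) - 1) *ᵥ (X *ᵥ u b)) k)) →
      (∑ k, (e k - A (∑ b ∈ P, (actD n b) *ᵥ (X *ᵥ (vs b - us b))) k) ^ 2) ≤
        ∑ k, (e k - A (∑ b ∈ P, (actD n b) *ᵥ (X *ᵥ (v b - u b))) k) ^ 2)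
    (m : ℕ)
    (hm : (∑ b ∈ P, ((if vs b ≠ 0 then 1 else 0) + (if us b ≠ 0 then 1 else 0))) ≤ m) :
    IsLeast { r : ℝ | ∃ (w : Fin m → Fin d → ℝ) (α : Fin m → ℝ),
        r = ∑ k, (e k - A (∑ j, α j • (fun k' => max ((X *ᵥ w j) k') 0)) k) ^ 2 }
      (∑ k, (e k - A (∑ b ∈ P, (actD n b) *ᵥ (X *ᵥ (vs b - us b))) k) ^ 2) :=
  stmt_10_general n d X A e P hP vs us hfeas hopt m hm
end
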